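/- Suppose f : ℝ^d → ℝ^d and g : ℝ^d → ℝ^{d×m} satisfy ⟨x, f(x)⟩ + ((p-1)/2)|g(x)|² ≤ K(1 + |x|²) for all x, with K > 0 and p > 2. Let h ≥ 1 and define f_h(x) = f(x) for |x| ≤ h, f_h(x) = (|x|/h) f(h x/|x|) for |x| > h, and similarly g_h. Then ⟨x, f_h(x)⟩ + ((p-1)/2)|g_h(x)|² ≤ 2K(1 + |x|²) for all x ∈ ℝ^d. -/

import Mathlib

/-!
Outside the ball of radius `h` the truncation is `x ↦ (‖x‖/h) • f(y)` with `y = (h/‖x‖) • x` on the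
sphere of radius `h`. Since `x = (‖x‖/h) • y`, both terms of the Khasminskii functional at `x`
equal `(‖x‖/h)²` times the corresponding terms at `y`, so the functional is at most
`(‖x‖/h)² K (1 + h²) = K (‖x‖²/h² + ‖x‖²)`, which is `≤ 2K(1 + ‖x‖²)` as soon as `h ≥ 1`.
-/

open RealInnerProductSpace

variable {E G : Type*} [NormedAddCommGroup E] [InnerProductSpace ℝ E]
  [NormedAddCommGroup G] [NormedSpace ℝ G]

noncomputable def radialTruncation (h : ℝ) (F : E → G) (x : E) : G :=
  if ‖x‖ ≤ h then F x else (‖x‖ / h) • F ((h / ‖x‖) • x)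

lemma inner_smul_add_mul_norm_smul_sq (c a : ℝ) (x u : E) (v : G) :
    ⟪c • x, c • u⟫ + a * ‖c • v‖ ^ 2 = c ^ 2 * (⟪x, u⟫ + a * ‖v‖ ^ 2) := by
  rw [real_inner_smul_left, real_inner_smul_right, norm_smul, Real.norm_eq_abs, mul_pow, sq_abs]
  ring

lemma norm_div_norm_smul {h : ℝ} (hh : 0 ≤ h) {x : E} (hx : x ≠ 0) : ‖(h / ‖x‖) • x‖ = h := by
  rw [norm_smul, Real.norm_of_nonneg (by positivity), div_mul_cancel₀ _ (norm_ne_zero_iff.mpr hx)]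

lemma inner_add_norm_sq_radialTruncation_of_lt (f : E → E) (g : E → G) (a : ℝ) {h : ℝ}
    (hh : 0 < h) {x : E} (hx : h < ‖x‖) :
    ⟪x, radialTruncation h f x⟫ + a * ‖radialTruncation h g x‖ ^ 2 =
      (‖x‖ / h) ^ 2 * (⟪(h / ‖x‖) • x, f ((h / ‖x‖) • x)⟫ + a * ‖g ((h / ‖x‖) • x)‖ ^ 2) := by
  have hx0 : ‖x‖ ≠ 0 := (hh.trans hx).ne'
  have hrescale : x = (‖x‖ / h) • (h / ‖x‖) • x := by
    rw [smul_smul, div_mul_div_cancel₀ hh.ne', div_self hx0, one_smul]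
  simp only [radialTruncation, if_neg hx.not_ge]
  rw [← inner_smul_add_mul_norm_smul_sq, ← hrescale]

lemma div_sq_mul_one_add_sq_le {h r : ℝ} (hh : 1 ≤ h) :
    (r / h) ^ 2 * (1 + h ^ 2) ≤ 2 * (1 + r ^ 2) := by
  have hr : r ^ 2 / h ^ 2 ≤ r ^ 2 := div_le_self (sq_nonneg r) (one_le_pow₀ hh)
  calc (r / h) ^ 2 * (1 + h ^ 2) = r ^ 2 / h ^ 2 + r ^ 2 := by
        field_simp
    _ ≤ 2 * (1 + r ^ 2) := by linarith

theorem inner_add_norm_sq_radialTruncation_le {f : E → E} {g : E → G} {a K h : ℝ}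
    (hK : 0 ≤ K) (hh : 1 ≤ h) (hcond : ∀ x, ⟪x, f x⟫ + a * ‖g x‖ ^ 2 ≤ K * (1 + ‖x‖ ^ 2))
    (x : E) :
    ⟪x, radialTruncation h f x⟫ + a * ‖radialTruncation h g x‖ ^ 2 ≤ 2 * K * (1 + ‖x‖ ^ 2) := by
  rcases le_or_gt ‖x‖ h with hx | hx
  · simp only [radialTruncation, if_pos hx]
    nlinarith [hcond x, sq_nonneg ‖x‖]
  · have hh0 : 0 < h := one_pos.trans_le hh
    have hy := hcond ((h / ‖x‖) • x)
    rw [norm_div_norm_smul hh0.le (norm_pos_iff.mp (hh0.trans hx))] at hy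
    rw [inner_add_norm_sq_radialTruncation_of_lt f g a hh0 hx]
    calc (‖x‖ / h) ^ 2 * (⟪(h / ‖x‖) • x, f ((h / ‖x‖) • x)⟫ + a * ‖g ((h / ‖x‖) • x)‖ ^ 2)
        ≤ (‖x‖ / h) ^ 2 * (K * (1 + h ^ 2)) := mul_le_mul_of_nonneg_left hy (sq_nonneg _)
      _ = K * ((‖x‖ / h) ^ 2 * (1 + h ^ 2)) := by ring
      _ ≤ K * (2 * (1 + ‖x‖ ^ 2)) := mul_le_mul_of_nonneg_left (div_sq_mul_one_add_sq_le hh) hK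
      _ = 2 * K * (1 + ‖x‖ ^ 2) := by ring

theorem stmt_4_general {d m : ℕ}
    (f : EuclideanSpace ℝ (Fin d) → EuclideanSpace ℝ (Fin d))
    (g : EuclideanSpace ℝ (Fin d) → EuclideanSpace ℝ (Fin d × Fin m))
    (K p : ℝ) (hK : 0 < K)
    (hcond : ∀ x : EuclideanSpace ℝ (Fin d),
      (inner ℝ x (f x) : ℝ) + (p - 1) / 2 * ‖g x‖ ^ 2 ≤ K * (1 + ‖x‖ ^ 2))
    (h : ℝ) (hh : 1 ≤ h)
    (fh : EuclideanSpace ℝ (Fin d) → EuclideanSpace ℝ (Fin d))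
    (gh : EuclideanSpace ℝ (Fin d) → EuclideanSpace ℝ (Fin d × Fin m))
    (hfh : ∀ x, fh x = if ‖x‖ ≤ h then f x else (‖x‖ / h) • f ((h / ‖x‖) • x))
    (hgh : ∀ x, gh x = if ‖x‖ ≤ h then g x else (‖x‖ / h) • g ((h / ‖x‖) • x)) :
    ∀ x : EuclideanSpace ℝ (Fin d),
      (inner ℝ x (fh x) : ℝ) + (p - 1) / 2 * ‖gh x‖ ^ 2 ≤ 2 * K * (1 + ‖x‖ ^ 2) := by
  obtain rfl : fh = radialTruncation h f := funext hfh
  obtain rfl : gh = radialTruncation h g := funext hgh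
  exact inner_add_norm_sq_radialTruncation_le hK.le hh hcond

theorem stmt_4 {d m : ℕ}
    (f : EuclideanSpace ℝ (Fin d) → EuclideanSpace ℝ (Fin d))
    (g : EuclideanSpace ℝ (Fin d) → EuclideanSpace ℝ (Fin d × Fin m))
    (K p : ℝ) (hK : 0 < K) (hp : 2 < p)
    (hcond : ∀ x : EuclideanSpace ℝ (Fin d),
      (inner ℝ x (f x) : ℝ) + (p - 1) / 2 * ‖g x‖ ^ 2 ≤ K * (1 + ‖x‖ ^ 2))
    (h : ℝ) (hh : 1 ≤ h)
    (fh : EuclideanSpace ℝ (Fin d) → EuclideanSpace ℝ (Fin d))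
    (gh : EuclideanSpace ℝ (Fin d) → EuclideanSpace ℝ (Fin d × Fin m))
    (hfh : ∀ x, fh x = if ‖x‖ ≤ h then f x else (‖x‖ / h) • f ((h / ‖x‖) • x))
    (hgh : ∀ x, gh x = if ‖x‖ ≤ h then g x else (‖x‖ / h) • g ((h / ‖x‖) • x)) :
    ∀ x : EuclideanSpace ℝ (Fin d),
      (inner ℝ x (fh x) : ℝ) + (p - 1) / 2 * ‖gh x‖ ^ 2 ≤ 2 * K * (1 + ‖x‖ ^ 2) :=
  stmt_4_general f g K p hK hcond h hh fh gh hfh hgh
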